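/- Let N = 2^e with e ≥ 1, let m be an integer with 5m ≡ 1 (mod N), and set S = L²⁰·R^m·L⁻⁴·R⁻¹ in SL(2,ℤ). Then the element (L·R⁻¹·L)⁻¹·S·(L·R⁻¹·L)·S lies in Γ(N). -/

import Mathlib

open Matrix CongruenceSubgroup

local notation "SL2Z" => Matrix.SpecialLinearGroup (Fin 2) ℤ

/-- The matrix `L = [[1,0],[1,1]]` as an element of `SL(2, ℤ)`. -/
def L : SL2Z := ⟨!![1, 0; 1, 1], by norm_num [Matrix.det_fin_two_of]⟩

/-- The matrix `R = [[1,1],[0,1]]` as an element of `SL(2, ℤ)`. -/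
def R : SL2Z := ⟨!![1, 1; 0, 1], by norm_num [Matrix.det_fin_two_of]⟩

/-!
Modulo `2 ^ e` the relation `5 m ≡ 1` makes `S` congruent to the diagonal matrix `diag(m, 5)`,
while `L R⁻¹ L` is the rotation `[[0,-1],[1,0]]`. Conjugating a diagonal element of `SL(2)` by an
antidiagonal one swaps its diagonal entries, so the product reduces to `diag(5m, 5m) = 1`.
-/

open ModularGroup

lemma Matrix.SpecialLinearGroup.inv_mul_mul_mul_self_eq_one_of_antidiagonal_of_diagonal
    {K : Type*} [CommRing K] {w g : SpecialLinearGroup (Fin 2) K}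
    (hw₀₀ : w 0 0 = 0) (hw₁₁ : w 1 1 = 0) (hg₀₁ : g 0 1 = 0) (hg₁₀ : g 1 0 = 0) :
    w⁻¹ * g * w * g = 1 := by
  have hw : (w : Matrix (Fin 2) (Fin 2) K) = !![0, w 0 1; w 1 0, 0] := by
    ext i j; fin_cases i <;> fin_cases j <;> simp [hw₀₀, hw₁₁]
  have hg : (g : Matrix (Fin 2) (Fin 2) K) = !![g 0 0, 0; 0, g 1 1] := by
    ext i j; fin_cases i <;> fin_cases j <;> simp [hg₀₁, hg₁₀]
  have hdet_w := w.det_coe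
  have hdet_g := g.det_coe
  rw [hw, det_fin_two_of] at hdet_w
  rw [hg, det_fin_two_of] at hdet_g
  refine Matrix.SpecialLinearGroup.ext _ _ fun i j => ?_
  rw [Matrix.SpecialLinearGroup.coe_mul, Matrix.SpecialLinearGroup.coe_mul,
    Matrix.SpecialLinearGroup.coe_mul, Matrix.SpecialLinearGroup.coe_inv, hw, hg,
    adjugate_fin_two_of]
  fin_cases i <;> fin_cases j <;> simp <;>
    linear_combination g 0 0 * g 1 1 * hdet_w + hdet_g

lemma R_eq_T : R = T := rfl

lemma L_eq_conj_T_inv : L = S * T⁻¹ * S⁻¹ := by decide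

lemma L_mul_R_inv_mul_L : L * R⁻¹ * L = S := by decide

lemma coe_L_zpow (n : ℤ) : ((L ^ n : SL2Z) : Matrix (Fin 2) (Fin 2) ℤ) = !![1, 0; n, 1] := by
  rw [L_eq_conj_T_inv, conj_zpow, _root_.inv_zpow']
  simp [coe_T_zpow, adjugate_fin_two]

lemma coe_L_pow_mul_R_zpow_mul_L_zpow_mul_R_inv (m : ℤ) :
    ((L ^ 20 * R ^ m * L ^ (-4 : ℤ) * R⁻¹ : SL2Z) : Matrix (Fin 2) (Fin 2) ℤ) =
      !![1 - 4 * m, 5 * m - 1; 16 - 80 * m, 100 * m - 15] := by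
  rw [← zpow_natCast L 20, ← _root_.zpow_neg_one, R_eq_T]
  simp only [Matrix.SpecialLinearGroup.coe_mul, coe_L_zpow, coe_T_zpow]
  ext i j
  fin_cases i <;> fin_cases j <;> simp [Matrix.mul_apply, Fin.sum_univ_succ] <;> ring

theorem stmt_1_general (e : ℕ) (m : ℤ)
    (hm : 5 * m ≡ 1 [ZMOD ((2 : ℤ) ^ e)])
    (S : SL2Z) (hS : S = L ^ 20 * R ^ m * L ^ (-4 : ℤ) * R⁻¹) :
    (L * R⁻¹ * L)⁻¹ * S * (L * R⁻¹ * L) * S ∈ Gamma (2 ^ e) := by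
  have h5m : 5 * (m : ZMod (2 ^ e)) = 1 := by
    exact_mod_cast (ZMod.intCast_eq_intCast_iff (5 * m) 1 (2 ^ e)).2 (by exact_mod_cast hm)
  have hSmat : (S : Matrix (Fin 2) (Fin 2) ℤ) = _ :=
    hS ▸ coe_L_pow_mul_R_zpow_mul_L_zpow_mul_R_inv m
  rw [Gamma_mem', map_mul, map_mul, map_mul, map_inv, L_mul_R_inv_mul_L]
  refine Matrix.SpecialLinearGroup.inv_mul_mul_mul_self_eq_one_of_antidiagonal_of_diagonal
    (by simp) (by simp) ?_ ?_ <;>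
    simp only [SL_reduction_mod_hom_val, hSmat, of_apply, cons_val', cons_val_zero, cons_val_one,
      cons_val_fin_one, Int.cast_sub, Int.cast_mul, Int.cast_ofNat, Int.cast_one]
  · linear_combination h5m
  · linear_combination -16 * h5m

theorem stmt_1 (e : ℕ) (he : 1 ≤ e) (m : ℤ)
    (hm : 5 * m ≡ 1 [ZMOD ((2 : ℤ) ^ e)])
    (S : SL2Z) (hS : S = L ^ 20 * R ^ m * L ^ (-4 : ℤ) * R⁻¹) :
    (L * R⁻¹ * L)⁻¹ * S * (L * R⁻¹ * L) * S ∈ Gamma (2 ^ e) :=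
  stmt_1_general e m hm S hS
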